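/- If a finite set of pairwise orthogonal unit vectors in H_A ⊗ H_B can be perfectly distinguished by a separable POVM, then for every orthogonal direct-sum decomposition H_A ⊗ H_B = V ⊕ V^⊥ with each state lying entirely in V or in V^⊥, the subsets of states lying in V and in V^⊥ are each perfectly distinguishable by a separable POVM on the respective subspace, provided the projectors onto V and V^⊥ are themselves of product form. -/
import Mathlib


open Kronecker Matrix
open scoped ComplexOrder Classical

/-- Expectation value `⟨ψ|M|ψ⟩`. -/
noncomputable def expect {a b : ℕ} (M : Matrix (Fin a × Fin b) (Fin a × Fin b) ℂ)
    (ψ : Fin a × Fin b → ℂ) : ℂ :=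
  star ψ ⬝ᵥ M.mulVec ψ

/-- A family `{A_k ⊗ B_k}` is a separable POVM perfectly distinguishing the
states `ψ i` for `i` in the (sub)collection singled out by `sel`, with the
POVM elements summing to `T`: all elements are products of positive
semidefinite operators, each element is consistent with at most one selected
state, and for each selected state the outcomes associated to it have total
probability `1`. -/
def PerfectSepPOVM {a b n : ℕ} (ψ : Fin n → (Fin a × Fin b → ℂ))
    (sel : Fin n → Prop) (T : Matrix (Fin a × Fin b) (Fin a × Fin b) ℂ) : Prop :=
  ∃ (K : ℕ) (A : Fin K → Matrix (Fin a) (Fin a) ℂ)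
    (B : Fin K → Matrix (Fin b) (Fin b) ℂ),
    (∀ k, (A k).PosSemidef ∧ (B k).PosSemidef) ∧
    (∑ k, A k ⊗ₖ B k) = T ∧
    (∀ k, ∀ i j : Fin n, sel i → sel j →
      expect (A k ⊗ₖ B k) (ψ i) ≠ 0 → expect (A k ⊗ₖ B k) (ψ j) ≠ 0 → i = j) ∧
    (∀ i, sel i →
      ∑ k ∈ Finset.univ.filter (fun k => expect (A k ⊗ₖ B k) (ψ i) ≠ 0),
        expect (A k ⊗ₖ B k) (ψ i) = 1)

lemma sep_povm_restrict_aux {a b n : ℕ} (ψ : Fin n → (Fin a × Fin b → ℂ))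
    (sel : Fin n → Prop)
    (RA : Matrix (Fin a) (Fin a) ℂ) (RB : Matrix (Fin b) (Fin b) ℂ)
    (hRA : RA.IsHermitian ∧ RA * RA = RA) (hRB : RB.IsHermitian ∧ RB * RB = RB)
    (hfix : ∀ i, sel i → (RA ⊗ₖ RB).mulVec (ψ i) = ψ i)
    (hdist : PerfectSepPOVM ψ (fun _ => True) 1) :
    PerfectSepPOVM ψ sel (RA ⊗ₖ RB) := by
  obtain ⟨K, A, B, hpos, hsum, hdisc, hprob⟩ := hdist
  refine ⟨K, fun k => RA * A k * RA, fun k => RB * B k * RB, ?_, ?_, ?_, ?_⟩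
  · intro k
    constructor
    · have := (hpos k).1.conjTranspose_mul_mul_same RA
      rwa [hRA.1.eq] at this
    · have := (hpos k).2.conjTranspose_mul_mul_same RB
      rwa [hRB.1.eq] at this
  · have hfac : ∀ k, (RA * A k * RA) ⊗ₖ (RB * B k * RB)
        = (RA ⊗ₖ RB) * (A k ⊗ₖ B k) * (RA ⊗ₖ RB) := by
      intro k
      rw [Matrix.mul_kronecker_mul, Matrix.mul_kronecker_mul]
    simp only [hfac]
    rw [← Finset.sum_mul, ← Finset.mul_sum, hsum, mul_one,
      ← Matrix.mul_kronecker_mul, hRA.2, hRB.2]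
  all_goals
  · have key : ∀ k i, sel i →
        expect ((RA * A k * RA) ⊗ₖ (RB * B k * RB)) (ψ i)
          = expect (A k ⊗ₖ B k) (ψ i) := by
      intro k i hi
      have hherm : (RA ⊗ₖ RB)ᴴ = RA ⊗ₖ RB := by
        conv_rhs => rw [← hRA.1.eq, ← hRB.1.eq]
        ext ⟨i1, i2⟩ ⟨j1, j2⟩
        simp [Matrix.conjTranspose_apply, Matrix.kroneckerMap_apply, star_mul']
      have hfac : (RA * A k * RA) ⊗ₖ (RB * B k * RB)
          = (RA ⊗ₖ RB) * (A k ⊗ₖ B k) * (RA ⊗ₖ RB) := by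
        rw [Matrix.mul_kronecker_mul, Matrix.mul_kronecker_mul]
      have hstar : star (ψ i) ᵥ* (RA ⊗ₖ RB) = star (ψ i) := by
        have h2 := Matrix.star_mulVec (RA ⊗ₖ RB) (ψ i)
        rw [hfix i hi, hherm] at h2
        exact h2.symm
      unfold expect
      rw [hfac, ← Matrix.mulVec_mulVec, ← Matrix.mulVec_mulVec, hfix i hi,
        Matrix.dotProduct_mulVec, hstar]
    first
    | · intro k i j hi hj h1 h2
        exact hdisc k i j trivial trivial
          (by rwa [← key k i hi]) (by rwa [← key k j hj])
    | · intro i hi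
        have : ∀ k, expect ((RA * A k * RA) ⊗ₖ (RB * B k * RB)) (ψ i)
            = expect (A k ⊗ₖ B k) (ψ i) := fun k => key k i hi
        simp only [this]
        exact hprob i trivial

/-- If pairwise orthogonal unit vectors in `H_A ⊗ H_B` are perfectly
distinguishable by a separable POVM, and `H_A ⊗ H_B = V ⊕ V^⊥` is an
orthogonal decomposition whose two projectors `P_A ⊗ P_B` and `Q_A ⊗ Q_B` are
of product form, with each state lying entirely in `V` or in `V^⊥`, then the
states lying in `V` and those lying in `V^⊥` are each perfectly
distinguishable by a separable POVM on the respective subspace (POVM elements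
summing to the corresponding projector). -/
theorem sep_povm_restricts (a b n : ℕ)
    (ψ : Fin n → (Fin a × Fin b → ℂ))
    (hunit : ∀ i, ∑ p, star (ψ i p) * ψ i p = 1)
    (horth : ∀ i j, i ≠ j → ∑ p, star (ψ i p) * ψ j p = 0)
    (hdist : PerfectSepPOVM ψ (fun _ => True) 1)
    (PA QA : Matrix (Fin a) (Fin a) ℂ) (PB QB : Matrix (Fin b) (Fin b) ℂ)
    (hPA : PA.IsHermitian ∧ PA * PA = PA) (hPB : PB.IsHermitian ∧ PB * PB = PB)
    (hQA : QA.IsHermitian ∧ QA * QA = QA) (hQB : QB.IsHermitian ∧ QB * QB = QB)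
    (hcompl : PA ⊗ₖ PB + QA ⊗ₖ QB = 1)
    (hsplit : ∀ i, (PA ⊗ₖ PB).mulVec (ψ i) = ψ i ∨ (PA ⊗ₖ PB).mulVec (ψ i) = 0) :
    PerfectSepPOVM ψ (fun i => (PA ⊗ₖ PB).mulVec (ψ i) = ψ i) (PA ⊗ₖ PB) ∧
    PerfectSepPOVM ψ (fun i => (PA ⊗ₖ PB).mulVec (ψ i) = 0) (QA ⊗ₖ QB) := by
  constructor
  · exact sep_povm_restrict_aux ψ _ PA PB hPA hPB (fun i hi => hi) hdist
  · refine sep_povm_restrict_aux ψ _ QA QB hQA hQB (fun i hi => ?_) hdist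
    have := congrArg (fun M => M.mulVec (ψ i)) hcompl
    simpa [Matrix.add_mulVec, hi] using this
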